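/- arXiv:2103.05835 — 2 statements merged into one kernel-verified Lean document; each statement's English description precedes it below -/
import Mathlib

section
/- Suppose for each i, α_i ∈ (0,1), d_i = ∑_{j≠i} |w i j|, and the vector z* satisfies for each i: (α_i + (1-α_i) d_i) z*_i = α_i s_i + (1-α_i) ∑_{j≠i} w i j · z*_j. Then z* = (Λ + (I-Λ)L)⁻¹ Λ s, where L = D - W with D diagonal of row absolute sums of W, and Λ = diag(α). -/
set_option maxRecDepth 4000


theorem stmt_5 {n : ℕ} (W : Matrix (Fin n) (Fin n) ℝ) (α s z : Fin n → ℝ)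
    (hW : ∀ i, W i i = 0)
    (hα : ∀ i, 0 < α i ∧ α i < 1)
    (heq : ∀ i,
      (α i + (1 - α i) * ∑ j ∈ Finset.univ.erase i, |W i j|) * z i =
        α i * s i + (1 - α i) * ∑ j ∈ Finset.univ.erase i, W i j * z j) :
    let D : Matrix (Fin n) (Fin n) ℝ := Matrix.diagonal (fun i => ∑ j, |W i j|)
    let L : Matrix (Fin n) (Fin n) ℝ := D - W
    let Λ : Matrix (Fin n) (Fin n) ℝ := Matrix.diagonal α
    z = (Λ + (1 - Λ) * L)⁻¹.mulVec (Λ.mulVec s) := by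
  intro D L Λ
  set M : Matrix (Fin n) (Fin n) ℝ := Λ + (1 - Λ) * L with hM
  have hdsum : ∀ i, (∑ j, |W i j|) = ∑ j ∈ Finset.univ.erase i, |W i j| := by
    intro i
    rw [← Finset.sum_erase_add _ _ (Finset.mem_univ i), hW i, abs_zero, add_zero]
  have hMentry : ∀ i j, M i j =
      (if i = j then α i + (1 - α i) * ∑ k ∈ Finset.univ.erase i, |W i k| else 0)
        - (1 - α i) * W i j := by
    have h1Λ : (1 : Matrix (Fin n) (Fin n) ℝ) - Λ = Matrix.diagonal (fun i => 1 - α i) := by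
      simp only [Λ]
      rw [← Matrix.diagonal_one, Matrix.diagonal_sub]
    intro i j
    rw [hM, Matrix.add_apply, h1Λ, Matrix.diagonal_mul]
    by_cases h : i = j
    · subst h
      simp only [L, D, Λ, Matrix.sub_apply, Matrix.diagonal_apply_eq, hW i, sub_zero,
        if_pos rfl, mul_zero]
      rw [hdsum i]; simp
    · simp only [L, D, Λ, Matrix.sub_apply, Matrix.diagonal_apply_ne _ h, if_neg h,
        Matrix.diagonal_apply_ne _ h, zero_sub, zero_add, mul_neg, zero_sub]
  have hMdiag : ∀ i, M i i = α i + (1 - α i) * ∑ k ∈ Finset.univ.erase i, |W i k| := by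
    intro i; rw [hMentry i i]; simp [hW i]
  have hMoff : ∀ i j, i ≠ j → M i j = -((1 - α i) * W i j) := by
    intro i j h; rw [hMentry i j]; simp [h]
  -- strict diagonal dominance
  have hdet : M.det ≠ 0 := by
    apply det_ne_zero_of_sum_row_lt_diag
    intro k
    have h1 : 0 < α k := (hα k).1
    have h2 : α k < 1 := (hα k).2
    have hdnn : (0:ℝ) ≤ ∑ j ∈ Finset.univ.erase k, |W k j| :=
      Finset.sum_nonneg fun j _ => abs_nonneg _
    have hdd : M k k = α k + (1 - α k) * ∑ j ∈ Finset.univ.erase k, |W k j| := hMdiag k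
    have hpos : 0 < M k k := by
      have h3 : (0:ℝ) ≤ (1 - α k) * ∑ j ∈ Finset.univ.erase k, |W k j| :=
        mul_nonneg (by linarith) hdnn
      rw [hdd]; linarith
    have hsum : ∑ j ∈ Finset.univ.erase k, ‖M k j‖ =
        (1 - α k) * ∑ j ∈ Finset.univ.erase k, |W k j| := by
      rw [Finset.mul_sum]
      apply Finset.sum_congr rfl
      intro j hj
      rw [hMoff k j (Ne.symm (Finset.ne_of_mem_erase hj))]
      rw [Real.norm_eq_abs, abs_neg, abs_mul, abs_of_nonneg (by linarith)]
    rw [hsum, Real.norm_eq_abs, abs_of_pos hpos, hdd]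
    linarith
  have hMz : M.mulVec z = Λ.mulVec s := by
    funext i
    have := heq i
    simp only [Matrix.mulVec, dotProduct]
    rw [← Finset.sum_erase_add _ _ (Finset.mem_univ i), hMdiag i]
    have : ∀ j ∈ Finset.univ.erase i, M i j * z j = -((1 - α i) * (W i j * z j)) := by
      intro j hj
      rw [hMoff i j (Ne.symm (Finset.ne_of_mem_erase hj))]; ring
    rw [Finset.sum_congr rfl this, Finset.sum_neg_distrib, ← Finset.mul_sum]
    have hΛ : ∑ j, Matrix.diagonal α i j * s j = α i * s i := by
      simp [Matrix.diagonal_apply, Finset.sum_ite_eq]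
    simp only [Λ]
    rw [hΛ]
    linarith [heq i]
  have hinv : M⁻¹ * M = 1 := Matrix.nonsing_inv_mul M (isUnit_iff_ne_zero.mpr hdet)
  rw [← hMz, Matrix.mulVec_mulVec, hinv, Matrix.one_mulVec]
end

section
/- Suppose the GODM iteration z^{t+1}_i = (α_i s_i + (1-α_i) ∑_j ω_{ij} z^t_j)/(α_i + (1-α_i) ∑_j |ω_{ij}|) is applied with all α_i ≥ α_min > 0. Then the iteration map is a contraction on ℝⁿ in the sup norm with contraction factor at most max_i (1-α_i)d_i/(α_i + (1-α_i)d_i) < 1, where d_i = ∑_j |ω_{ij}|; hence the iteration converges to the unique fixed point z* from any starting point. -/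
theorem stmt_14 {n : ℕ} [NeZero n] (ω : Matrix (Fin n) (Fin n) ℝ)
    (α s : Fin n → ℝ) (αmin : ℝ) (hαmin : 0 < αmin) (hge : ∀ i, αmin ≤ α i)
    (hα : ∀ i, 0 < α i ∧ α i < 1) :
    let d : Fin n → ℝ := fun i => ∑ j, |ω i j|
    let F : (Fin n → ℝ) → (Fin n → ℝ) := fun z i =>
      (α i * s i + (1 - α i) * ∑ j, ω i j * z j) / (α i + (1 - α i) * d i)
    let c : ℝ := Finset.univ.sup' Finset.univ_nonempty
      (fun i => (1 - α i) * d i / (α i + (1 - α i) * d i))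
    c < 1 ∧ (∀ z z' : Fin n → ℝ, dist (F z) (F z') ≤ c * dist z z') ∧
      ∃ zstar : Fin n → ℝ, F zstar = zstar ∧ (∀ z, F z = z → z = zstar) ∧
        ∀ z0 : Fin n → ℝ,
          Filter.Tendsto (fun t => F^[t] z0) Filter.atTop (nhds zstar) := by
  intro d F c
  have hd : ∀ i, 0 ≤ d i := fun i => Finset.sum_nonneg fun j _ => abs_nonneg _
  have hden : ∀ i, 0 < α i + (1 - α i) * d i := fun i =>
    add_pos_of_pos_of_nonneg (hα i).1
      (mul_nonneg (by linarith [(hα i).2]) (hd i))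
  have hterm_nonneg : ∀ i, 0 ≤ (1 - α i) * d i / (α i + (1 - α i) * d i) := fun i =>
    div_nonneg (mul_nonneg (by linarith [(hα i).2]) (hd i)) (hden i).le
  have hterm_lt : ∀ i, (1 - α i) * d i / (α i + (1 - α i) * d i) < 1 := fun i => by
    rw [div_lt_one (hden i)]; linarith [(hα i).1]
  have hc1 : c < 1 := by
    rw [Finset.sup'_lt_iff]
    intro i _; exact hterm_lt i
  have hc0 : 0 ≤ c := le_trans (hterm_nonneg ⟨0, Nat.pos_of_ne_zero (NeZero.ne n)⟩)
    (Finset.le_sup' (fun i => (1 - α i) * d i / (α i + (1 - α i) * d i))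
      (Finset.mem_univ _))
  have hlip : ∀ z z' : Fin n → ℝ, dist (F z) (F z') ≤ c * dist z z' := by
    intro z z'
    rw [dist_pi_le_iff (mul_nonneg hc0 dist_nonneg)]
    intro i
    have key : F z i - F z' i =
        (1 - α i) * (∑ j, ω i j * (z j - z' j)) / (α i + (1 - α i) * d i) := by
      simp only [F]
      rw [div_sub_div_same]
      congr 1
      rw [add_sub_add_left_eq_sub, ← mul_sub, ← Finset.sum_sub_distrib, Finset.mul_sum,
        Finset.mul_sum]
      exact Finset.sum_congr rfl fun j _ => by ring
    rw [Real.dist_eq, key, abs_div, abs_of_pos (hden i)]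
    have habs : |(1 - α i) * ∑ j, ω i j * (z j - z' j)| ≤ (1 - α i) * (d i * dist z z') := by
      rw [abs_mul, abs_of_nonneg (by linarith [(hα i).2] : (0:ℝ) ≤ 1 - α i)]
      apply mul_le_mul_of_nonneg_left _ (by linarith [(hα i).2])
      calc |∑ j, ω i j * (z j - z' j)| ≤ ∑ j, |ω i j * (z j - z' j)| :=
            Finset.abs_sum_le_sum_abs _ _
        _ ≤ ∑ j, |ω i j| * dist z z' := by
            apply Finset.sum_le_sum
            intro j _
            rw [abs_mul]
            exact mul_le_mul_of_nonneg_left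
              (le_trans (le_of_eq (Real.dist_eq _ _).symm) (dist_le_pi_dist z z' j))
              (abs_nonneg _)
        _ = d i * dist z z' := by rw [← Finset.sum_mul]
    calc |(1 - α i) * ∑ j, ω i j * (z j - z' j)| / (α i + (1 - α i) * d i)
        ≤ (1 - α i) * (d i * dist z z') / (α i + (1 - α i) * d i) :=
          div_le_div_of_nonneg_right habs (hden i).le |>.trans_eq rfl
      _ = ((1 - α i) * d i / (α i + (1 - α i) * d i)) * dist z z' := by ring
      _ ≤ c * dist z z' := by
          apply mul_le_mul_of_nonneg_right _ dist_nonneg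
          exact Finset.le_sup' (fun i => (1 - α i) * d i / (α i + (1 - α i) * d i))
            (Finset.mem_univ i)
  refine ⟨hc1, hlip, ?_⟩
  have hcw : ContractingWith ⟨c, hc0⟩ F := by
    constructor
    · exact_mod_cast hc1
    · exact LipschitzWith.of_dist_le_mul fun z z' => hlip z z'
  haveI : Nonempty (Fin n → ℝ) := ⟨0⟩
  refine ⟨hcw.fixedPoint F, hcw.fixedPoint_isFixedPt, ?_, fun z0 => hcw.tendsto_iterate_fixedPoint z0⟩
  intro z hz
  exact hcw.fixedPoint_unique hz
end
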